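/- Everywhere on [0, log 2] × [0, log 2] where the partial derivative exists, |∂f₂/∂x| ≤ 1, and the inequality is strict, |∂f₂/∂x| < 1, at every point (x,y) lying in the interior (0, log 2) × (0, log 2). By symmetry the same holds for ∂f₂/∂y. -/

import Mathlib

noncomputable def binEnt (p : ℝ) : ℝ := -p * Real.log p - (1 - p) * Real.log (1 - p)

noncomputable def binEntInv (x : ℝ) : ℝ :=
  sInf {p : ℝ | p ∈ Set.Icc (0 : ℝ) (1 / 2) ∧ binEnt p = x}

noncomputable def starOp (p q : ℝ) : ℝ := p * (1 - q) + q * (1 - p)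

noncomputable def f₂ (x y : ℝ) : ℝ := binEnt (starOp (binEntInv x) (binEntInv y))

/-- Shannon entropy (natural log) of a discrete random variable `X` on `(Ω, μ)`. -/
noncomputable def entropy {Ω S : Type*} [MeasurableSpace Ω] (μ : MeasureTheory.Measure Ω)
    (X : Ω → S) : ℝ :=
  ∑' s : S, Real.negMulLog ((μ (X ⁻¹' {s})).toReal)

/-- Conditional Shannon entropy `H(X | U) = H(X, U) - H(U)`. -/
noncomputable def condEntropy {Ω S T : Type*} [MeasurableSpace Ω] (μ : MeasureTheory.Measure Ω)
    (X : Ω → S) (U : Ω → T) : ℝ :=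
  entropy μ (fun ω => (X ω, U ω)) - entropy μ U

/-- Independence of two discrete random variables. -/
def IndepRV {Ω S T : Type*} [MeasurableSpace Ω] (μ : MeasureTheory.Measure Ω)
    (X : Ω → S) (Y : Ω → T) : Prop :=
  ∀ (a : S) (b : T), μ (X ⁻¹' {a} ∩ Y ⁻¹' {b}) = μ (X ⁻¹' {a}) * μ (Y ⁻¹' {b})

/-- Mutual independence of a finite family of discrete random variables. -/
def iIndepRV {Ω G ι : Type*} [Fintype ι] [MeasurableSpace Ω] (μ : MeasureTheory.Measure Ω)
    (X : ι → Ω → G) : Prop :=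
  ∀ a : ι → G, μ (⋂ i, X i ⁻¹' {a i}) = ∏ i, μ (X i ⁻¹' {a i})

/-- `fG G x y` : the minimum entropy `H(X+Y)` over independent `G`-valued random variables
`X, Y` with `H(X) = x` and `H(Y) = y`. -/
noncomputable def fG (G : Type) [AddCommGroup G] (x y : ℝ) : ℝ :=
  sInf { z : ℝ | ∃ (Ω : Type) (_ : MeasurableSpace Ω) (μ : MeasureTheory.Measure Ω),
    MeasureTheory.IsProbabilityMeasure μ ∧ ∃ X Y : Ω → G, IndepRV μ X Y ∧
      entropy μ X = x ∧ entropy μ Y = y ∧ entropy μ (fun ω => X ω + Y ω) = z }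

/-- `fGk G k x` : the minimum entropy `H(X₁ + ⋯ + X_k)` over `k` mutually independent
`G`-valued random variables with `H(Xᵢ) = xᵢ`. -/
noncomputable def fGk (G : Type) [AddCommGroup G] (k : ℕ) (x : Fin k → ℝ) : ℝ :=
  sInf { z : ℝ | ∃ (Ω : Type) (_ : MeasurableSpace Ω) (μ : MeasureTheory.Measure Ω),
    MeasureTheory.IsProbabilityMeasure μ ∧ ∃ X : Fin k → Ω → G, iIndepRV μ X ∧
      (∀ i, entropy μ (X i) = x i) ∧ entropy μ (fun ω => ∑ i, X i ω) = z }

/-- Iterated application `fG G x₁ (fG G x₂ (… (fG G x_{r-1} x_r)…))`. -/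
noncomputable def iterFG (G : Type) [AddCommGroup G] : List ℝ → ℝ
  | [] => 0
  | [a] => a
  | a :: b :: rest => fG G a (iterFG G (b :: rest))

/-! With `p = h⁻¹(x)` and `q = h⁻¹(y)`, the chain rule gives
`∂f₂/∂x = (1 - 2q) · h'(p ⋆ q) / h'(p)` where `h'(s) = log(1 - s) - log s`. Since
`p ≤ p ⋆ q ≤ 1/2` and `h'` is decreasing and nonnegative on `(0, 1/2]`, this lies in
`[0, 1 - 2q]`. On the boundary of the square: for `y = log 2` the map `x ↦ f₂ x y` is constant;
at `x = 0` it is constant to the left, because `binEntInv` takes the junk value `sInf ∅ = 0`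
outside `[0, log 2]`; and at `x = log 2` (with `y < log 2`) it jumps from `log 2` down to `y`,
so no derivative exists there. -/

open Real Set Filter Topology

lemma binEnt_eq_binEntropy : binEnt = binEntropy := by
  ext p
  simp only [binEnt, binEntropy, log_inv]
  ring

lemma binEntropy_strictMonoOn_Icc_half : StrictMonoOn binEntropy (Icc 0 (1 / 2)) := by
  rw [one_div]
  exact binEntropy_strictMonoOn

lemma binEntropy_surjOn : SurjOn binEntropy (Icc 0 (1 / 2)) (Icc 0 (log 2)) := by
  have := intermediate_value_Icc (by norm_num : (0 : ℝ) ≤ 1 / 2) binEntropy_continuous.continuousOn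
  rwa [binEntropy_zero, one_div, binEntropy_two_inv, ← one_div] at this

lemma deriv_binEntropy_antitoneOn : AntitoneOn (deriv binEntropy) (Ioo 0 1) := by
  intro s hs t ht hst
  simp only [deriv_binEntropy]
  linarith [log_le_log hs.1 hst,
    log_le_log (by linarith [ht.2] : 0 < 1 - t) (by linarith : 1 - t ≤ 1 - s)]

lemma deriv_binEntropy_nonneg {p : ℝ} (h0 : 0 < p) (h : p ≤ 1 / 2) : 0 ≤ deriv binEntropy p := by
  rw [deriv_binEntropy, sub_nonneg]
  exact log_le_log h0 (by linarith)

lemma deriv_binEntropy_pos {p : ℝ} (h0 : 0 < p) (h : p < 1 / 2) : 0 < deriv binEntropy p := by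
  rw [deriv_binEntropy, sub_pos]
  exact log_lt_log h0 (by linarith)

lemma hasDerivAt_deriv_binEntropy {p : ℝ} (h0 : 0 < p) (h1 : p < 1) :
    HasDerivAt binEntropy (deriv binEntropy p) p :=
  (hasDerivAt_binEntropy h0.ne' h1.ne).differentiableAt.hasDerivAt

lemma binEntInv_binEntropy {p : ℝ} (hp : p ∈ Icc (0 : ℝ) (1 / 2)) :
    binEntInv (binEntropy p) = p := by
  have hsingleton : {q | q ∈ Icc (0 : ℝ) (1 / 2) ∧ binEntropy q = binEntropy p} = {p} :=
    Set.ext fun q => ⟨fun ⟨hq, he⟩ => binEntropy_strictMonoOn_Icc_half.injOn hq hp he,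
      by rintro rfl; exact ⟨hp, rfl⟩⟩
  rw [binEntInv, binEnt_eq_binEntropy, hsingleton, csInf_singleton]

lemma binEntInv_of_notMem {x : ℝ} (hx : x ∉ Icc 0 (log 2)) : binEntInv x = 0 := by
  rw [binEntInv, binEnt_eq_binEntropy]
  convert Real.sInf_empty
  refine eq_empty_of_forall_notMem fun p ⟨hp, he⟩ => hx ?_
  exact he ▸ ⟨binEntropy_nonneg hp.1 (by linarith [hp.2]), binEntropy_le_log_two⟩

lemma binEntInv_mem_Icc {x : ℝ} (hx : x ∈ Icc 0 (log 2)) : binEntInv x ∈ Icc (0 : ℝ) (1 / 2) := by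
  obtain ⟨p, hp, rfl⟩ := binEntropy_surjOn hx
  rwa [binEntInv_binEntropy hp]

lemma binEntropy_binEntInv {x : ℝ} (hx : x ∈ Icc 0 (log 2)) : binEntropy (binEntInv x) = x := by
  obtain ⟨p, hp, rfl⟩ := binEntropy_surjOn hx
  rw [binEntInv_binEntropy hp]

lemma binEntInv_of_nonpos {x : ℝ} (hx : x ≤ 0) : binEntInv x = 0 := by
  rcases hx.eq_or_lt with rfl | hx
  · simpa using binEntInv_binEntropy (p := 0) (by norm_num)
  · exact binEntInv_of_notMem fun h => hx.not_ge h.1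

lemma binEntInv_log_two : binEntInv (log 2) = 1 / 2 := by
  simpa using binEntInv_binEntropy (p := 1 / 2) (by norm_num)

lemma binEntInv_mem_Ioo {x : ℝ} (hx : x ∈ Ioo 0 (log 2)) : binEntInv x ∈ Ioo (0 : ℝ) (1 / 2) := by
  obtain ⟨p, hp, rfl⟩ := binEntropy_surjOn (Ioo_subset_Icc_self hx)
  rw [binEntInv_binEntropy hp]
  refine ⟨hp.1.lt_of_ne ?_, hp.2.lt_of_ne ?_⟩ <;> rintro rfl
  · simp at hx
  · simp at hx

lemma binEntInv_image_Ioo : binEntInv '' Ioo 0 (log 2) = Ioo 0 (1 / 2) := by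
  refine (image_subset_iff.2 fun x => binEntInv_mem_Ioo).antisymm fun p hp => ?_
  refine ⟨binEntropy p, ⟨binEntropy_pos hp.1 (by linarith [hp.2]), ?_⟩,
    binEntInv_binEntropy (Ioo_subset_Icc_self hp)⟩
  exact binEntropy_lt_log_two.2 (by rw [← one_div]; exact hp.2.ne)

lemma binEntInv_monotoneOn : MonotoneOn binEntInv (Icc 0 (log 2)) := by
  intro x hx y hy hxy
  obtain ⟨p, hp, rfl⟩ := binEntropy_surjOn hx
  obtain ⟨q, hq, rfl⟩ := binEntropy_surjOn hy
  rw [binEntInv_binEntropy hp, binEntInv_binEntropy hq]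
  exact (binEntropy_strictMonoOn_Icc_half.le_iff_le hp hq).1 hxy

lemma binEntInv_continuousAt {a : ℝ} (ha : a ∈ Ioo 0 (log 2)) : ContinuousAt binEntInv a :=
  continuousAt_of_monotoneOn_of_image_mem_nhds (binEntInv_monotoneOn.mono Ioo_subset_Icc_self)
    (isOpen_Ioo.mem_nhds ha) (binEntInv_image_Ioo ▸ isOpen_Ioo.mem_nhds (binEntInv_mem_Ioo ha))

lemma hasDerivAt_binEntInv {a : ℝ} (ha : a ∈ Ioo 0 (log 2)) :
    HasDerivAt binEntInv (deriv binEntropy (binEntInv a))⁻¹ a := by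
  obtain ⟨hp0, hp⟩ := binEntInv_mem_Ioo ha
  refine HasDerivAt.of_local_left_inverse (binEntInv_continuousAt ha)
    (hasDerivAt_deriv_binEntropy hp0 (by linarith)) (deriv_binEntropy_pos hp0 hp).ne' ?_
  filter_upwards [isOpen_Ioo.mem_nhds ha] with x hx
  exact binEntropy_binEntInv (Ioo_subset_Icc_self hx)

lemma starOp_comm (p q : ℝ) : starOp p q = starOp q p := by
  simp only [starOp]
  ring

lemma starOp_mem_Icc {p q : ℝ} (hp : p ∈ Icc (0 : ℝ) (1 / 2)) (hq : q ∈ Icc (0 : ℝ) (1 / 2)) :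
    starOp p q ∈ Icc p (1 / 2) := by
  obtain ⟨hp0, hp1⟩ := hp
  obtain ⟨hq0, hq1⟩ := hq
  constructor <;> simp only [starOp] <;>
    nlinarith [mul_nonneg hq0 (by linarith : (0 : ℝ) ≤ 1 - 2 * p),
      mul_nonneg (by linarith : (0 : ℝ) ≤ 1 - 2 * p) (by linarith : (0 : ℝ) ≤ 1 - 2 * q)]

lemma deriv_binEntropy_starOp_div_mem_Icc {p q : ℝ} (hp : p ∈ Ioo (0 : ℝ) (1 / 2))
    (hq : q ∈ Icc (0 : ℝ) (1 / 2)) :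
    deriv binEntropy (starOp p q) / deriv binEntropy p ∈ Icc 0 1 := by
  obtain ⟨hpr, hr⟩ := starOp_mem_Icc (Ioo_subset_Icc_self hp) hq
  have hLp := deriv_binEntropy_pos hp.1 hp.2
  have hr0 : 0 < starOp p q := hp.1.trans_le hpr
  refine ⟨div_nonneg (deriv_binEntropy_nonneg hr0 hr) hLp.le, (div_le_one hLp).2 ?_⟩
  exact deriv_binEntropy_antitoneOn ⟨hp.1, by linarith [hp.2]⟩ ⟨hr0, by linarith⟩ hpr

lemma f₂_comm (x y : ℝ) : f₂ x y = f₂ y x := by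
  rw [f₂, f₂, starOp_comm]

lemma f₂_log_two_right (x : ℝ) : f₂ x (log 2) = log 2 := by
  rw [f₂, binEntInv_log_two, show starOp (binEntInv x) (1 / 2) = 1 / 2 by simp only [starOp]; ring,
    binEnt_eq_binEntropy, one_div, binEntropy_two_inv]

lemma f₂_of_binEntInv_eq_zero {x y : ℝ} (hx : binEntInv x = 0) (hy : y ∈ Icc 0 (log 2)) :
    f₂ x y = y := by
  rw [f₂, hx, show starOp 0 (binEntInv y) = binEntInv y by simp [starOp], binEnt_eq_binEntropy,
    binEntropy_binEntInv hy]

lemma hasDerivAt_f₂_left {x y : ℝ} (hx : x ∈ Ioo 0 (log 2)) (hy : y ∈ Icc 0 (log 2)) :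
    HasDerivAt (fun t => f₂ t y) ((1 - 2 * binEntInv y) *
      (deriv binEntropy (starOp (binEntInv x) (binEntInv y)) / deriv binEntropy (binEntInv x)))
      x := by
  have hp := binEntInv_mem_Ioo hx
  obtain ⟨hpr, hr⟩ := starOp_mem_Icc (Ioo_subset_Icc_self hp) (binEntInv_mem_Icc hy)
  have hstar : (fun t => starOp (binEntInv t) (binEntInv y)) =
      fun t => (1 - 2 * binEntInv y) * binEntInv t + binEntInv y := by
    ext t
    simp only [starOp]
    ring
  have hinner := ((hasDerivAt_binEntInv hx).const_mul (1 - 2 * binEntInv y)).add_const (binEntInv y)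
  rw [← hstar] at hinner
  have houter := hasDerivAt_deriv_binEntropy (hp.1.trans_le hpr) (by linarith)
  rw [show (fun t => f₂ t y) = binEntropy ∘ fun t => starOp (binEntInv t) (binEntInv y) by
    simp only [f₂, binEnt_eq_binEntropy]; rfl]
  exact (houter.comp x hinner).congr_deriv (by ring)

lemma exists_hasDerivAt_f₂_left_abs_le {x y : ℝ} (hx : x ∈ Ioo 0 (log 2))
    (hy : y ∈ Icc 0 (log 2)) :
    ∃ d, HasDerivAt (fun t => f₂ t y) d x ∧ |d| ≤ 1 - 2 * binEntInv y := by
  have hq := binEntInv_mem_Icc hy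
  obtain ⟨h0, h1⟩ := deriv_binEntropy_starOp_div_mem_Icc (binEntInv_mem_Ioo hx) hq
  refine ⟨_, hasDerivAt_f₂_left hx hy, ?_⟩
  rw [abs_of_nonneg (mul_nonneg (by linarith [hq.2]) h0)]
  exact mul_le_of_le_one_right (by linarith [hq.2]) h1

lemma HasDerivAt.eq_zero_of_eqOn_Iic {f : ℝ → ℝ} {d a c : ℝ} (hf : HasDerivAt f d a)
    (hc : EqOn f (fun _ => c) (Iic a)) : d = 0 :=
  (uniqueDiffOn_Iic a a self_mem_Iic).eq_deriv _ hf.hasDerivWithinAt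
    ((hasDerivWithinAt_const a _ c).congr hc (hc self_mem_Iic))

lemma not_continuousAt_f₂_log_two_left {y : ℝ} (hy : y ∈ Ico 0 (log 2)) :
    ¬ ContinuousAt (fun t => f₂ t y) (log 2) := by
  intro hc
  have hright : Tendsto (fun t => f₂ t y) (𝓝[>] log 2) (𝓝 y) :=
    tendsto_const_nhds.congr' <| eventually_nhdsWithin_of_forall fun t ht =>
      (f₂_of_binEntInv_eq_zero (binEntInv_of_notMem fun h => (not_le.2 ht) h.2)
        (Ico_subset_Icc_self hy)).symm
  have := tendsto_nhds_unique (hc.tendsto.mono_left nhdsWithin_le_nhds) hright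
  rw [f₂_comm, f₂_log_two_right] at this
  exact hy.2.ne' this

lemma abs_le_one_of_hasDerivAt_f₂_left {x y d : ℝ} (hx : x ∈ Icc 0 (log 2))
    (hy : y ∈ Icc 0 (log 2)) (hd : HasDerivAt (fun t => f₂ t y) d x) : |d| ≤ 1 := by
  rcases hy.2.eq_or_lt with rfl | hy2
  · rw [funext f₂_log_two_right] at hd
    simp [hd.unique (hasDerivAt_const x _)]
  rcases hx.1.eq_or_lt with rfl | hx0
  · simp [hd.eq_zero_of_eqOn_Iic fun t ht => f₂_of_binEntInv_eq_zero (binEntInv_of_nonpos ht) hy]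
  rcases hx.2.eq_or_lt with rfl | hx2
  · exact absurd hd.continuousAt (not_continuousAt_f₂_log_two_left ⟨hy.1, hy2⟩)
  obtain ⟨d', hd', hle⟩ := exists_hasDerivAt_f₂_left_abs_le ⟨hx0, hx2⟩ hy
  rw [hd.unique hd']
  linarith [(binEntInv_mem_Icc hy).1]

lemma abs_deriv_f₂_left_lt_one {x y : ℝ} (hx : x ∈ Ioo 0 (log 2)) (hy : y ∈ Ioo 0 (log 2)) :
    |deriv (fun t => f₂ t y) x| < 1 := by
  obtain ⟨d, hd, hle⟩ := exists_hasDerivAt_f₂_left_abs_le hx (Ioo_subset_Icc_self hy)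
  rw [hd.deriv]
  linarith [(binEntInv_mem_Ioo hy).1]

/-- Wherever the partial derivatives of `f₂` exist on `[0, log 2]²` they have absolute
value at most `1`, and strictly less than `1` in the interior `(0, log 2)²`.
By symmetry the same statement holds for both partial derivatives. -/
theorem abs_partial_deriv_le_one :
    (∀ x ∈ Set.Icc (0 : ℝ) (Real.log 2), ∀ y ∈ Set.Icc (0 : ℝ) (Real.log 2),
      (∀ d : ℝ, HasDerivAt (fun t => f₂ t y) d x → |d| ≤ 1) ∧
      (∀ d : ℝ, HasDerivAt (fun t => f₂ x t) d y → |d| ≤ 1)) ∧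
    (∀ x ∈ Set.Ioo (0 : ℝ) (Real.log 2), ∀ y ∈ Set.Ioo (0 : ℝ) (Real.log 2),
      |deriv (fun t => f₂ t y) x| < 1 ∧ |deriv (fun t => f₂ x t) y| < 1) := by
  have hswap : ∀ x, (fun t => f₂ x t) = fun t => f₂ t x := fun x => funext (f₂_comm x)
  refine ⟨fun x hx y hy => ⟨fun d hd => abs_le_one_of_hasDerivAt_f₂_left hx hy hd, fun d hd => ?_⟩,
    fun x hx y hy => ⟨abs_deriv_f₂_left_lt_one hx hy, ?_⟩⟩
  · rw [hswap] at hd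
    exact abs_le_one_of_hasDerivAt_f₂_left hy hx hd
  · rw [hswap]
    exact abs_deriv_f₂_left_lt_one hy hx
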